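/- Let X be a finite set with |X| ≥ 2, and index matrices by the nonempty subsets of X of even cardinality. Define G by G_{AB} = 2^{−|A|+1} if B ⊆ A and G_{AB} = 0 otherwise, and define H by H_{AB} = 2^{|B|−1} · 𝔼_{|A|−|B|} if B ⊆ A and H_{AB} = 0 otherwise. Then G is invertible with inverse H, i.e. G·H = H·G = I. -/

import Mathlib

open Finset

/-- The Euler numbers `𝔼ₖ`, defined by the EGF `1/cosh x = ∑ₖ 𝔼ₖ xᵏ/k!`
(so `𝔼₀ = 1`, `𝔼₂ = −1`, `𝔼₄ = 5`, and `𝔼ₖ = 0` for odd `k`); this recurrence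
is obtained by equating coefficients in `cosh x · (1/cosh x) = 1`. -/
noncomputable def eulerNumber : ℕ → ℚ
  | n =>
    (if n = 0 then 1 else 0) -
      ∑ k : Fin n, if (n - (k : ℕ)) % 2 = 0 then ((n.choose k : ℚ) * eulerNumber k) else 0
  decreasing_by exact k.2

/-!
Both `G` and `H` vanish off `B ⊆ A` and otherwise depend only on `|A|` and `|B|`. In a
product of two such matrices the `(A, C)` entry is a sum over the even sets `B` with
`C ⊆ B ⊆ A`, which groups by `|B \ C| = j` into a binomial sum over even `j ≤ n := |A \ C|`.
The powers of two cancel, and what is left is `∑_{j even} C(n, j) 𝔼_j` (for `GH`) or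
`∑_{j even} C(n, j) 𝔼_{n-j}` (for `HG`). As `n` is even, both are the defining recurrence
of the Euler numbers and equal `[n = 0]`, i.e. `[A = C]`.
-/
theorem eulerNumber_sum_choose (n : ℕ) :
    ∑ k ∈ range (n + 1), (if (n - k) % 2 = 0 then (n.choose k : ℚ) * eulerNumber k else 0)
      = if n = 0 then 1 else 0 := by
  rw [sum_range_succ, eulerNumber, Fin.sum_univ_eq_sum_range
    (fun k => if (n - k) % 2 = 0 then (n.choose k : ℚ) * eulerNumber k else 0)]
  simp

section
variable {K : Type*} [DivisionRing K] [CharZero K] {n : ℕ}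

theorem eulerNumber_sum_choose_of_even (hn : Even n) :
    ∑ k ∈ range (n + 1), (if Even k then (n.choose k : K) * eulerNumber k else 0)
      = if n = 0 then 1 else 0 := by
  have h := congrArg (Rat.cast (K := K)) (eulerNumber_sum_choose n)
  push_cast [apply_ite (Rat.cast (K := K))] at h
  rw [← h]
  refine sum_congr rfl fun k hk => ?_
  have hkn : k ≤ n := Nat.lt_succ_iff.mp (mem_range.mp hk)
  simp only [← Nat.even_iff, Nat.even_sub hkn, hn, true_iff]

theorem eulerNumber_sum_choose_rev_of_even (hn : Even n) :
    ∑ k ∈ range (n + 1), (if Even k then (n.choose k : K) * eulerNumber (n - k) else 0)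
      = if n = 0 then 1 else 0 := by
  rw [← sum_range_reflect, ← eulerNumber_sum_choose_of_even hn]
  refine sum_congr rfl fun k hk => ?_
  have hkn : k ≤ n := Nat.lt_succ_iff.mp (mem_range.mp hk)
  rw [Nat.add_sub_cancel, Nat.sub_sub_self hkn, Nat.choose_symm hkn]
  simp only [Nat.even_sub hkn, hn, true_iff]

end

namespace Finset

variable {α M : Type*} [DecidableEq α] [AddCommMonoid M]

theorem sum_Icc_apply_card {s t : Finset α} (h : s ⊆ t) (f : ℕ → M) :
    ∑ u ∈ Icc s t, f #u = ∑ k ∈ range (#(t \ s) + 1), (#(t \ s)).choose k • f (#s + k) := by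
  have hdisj : ∀ u ∈ (t \ s).powerset, Disjoint s u := fun u hu =>
    disjoint_of_subset_right (mem_powerset.mp hu) disjoint_sdiff
  rw [Icc_eq_image_powerset h, sum_image, ← sum_powerset_apply_card (fun k => f (#s + k))]
  · exact sum_congr rfl fun u hu => by rw [card_union_of_disjoint (hdisj u hu)]
  · intro u hu v hv huv
    simpa only [union_sdiff_cancel_left (hdisj u hu), union_sdiff_cancel_left (hdisj v hv)]
      using congrArg (· \ s) huv

end Finset

section cardMatrix

variable (α : Type*) {R : Type*} [DecidableEq α] [Semiring R]

def cardMatrix (g : ℕ → ℕ → R) :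
    Matrix {A : Finset α // A.Nonempty ∧ Even #A} {A : Finset α // A.Nonempty ∧ Even #A} R :=
  Matrix.of fun A B => if B.1 ⊆ A.1 then g #A.1 #B.1 else 0

variable {α} [Fintype α]

theorem cardMatrix_mul_apply (g h : ℕ → ℕ → R) (A C : {A : Finset α // A.Nonempty ∧ Even #A}) :
    (cardMatrix α g * cardMatrix α h) A C
      = ∑ u ∈ Icc C.1 A.1, if Even #u then g #A.1 #u * h #u #C.1 else 0 := by
  simp only [Matrix.mul_apply, cardMatrix, Matrix.of_apply]
  rw [← univ_inter (Icc _ _), ← sum_ite_mem, ← sum_subtype {u | u.Nonempty ∧ Even #u} (by simp)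
    (fun u => (if u ⊆ A.1 then g #A.1 #u else 0) * (if C.1 ⊆ u then h #u #C.1 else 0)), sum_filter]
  refine sum_congr rfl fun u _ => ?_
  by_cases hu : C.1 ⊆ u ∧ u ⊆ A.1
  · simp [hu, C.2.1.mono hu.1]
  · have : ¬ u ∈ Icc C.1 A.1 := by simpa using hu
    rw [if_neg this]
    split_ifs <;> simp_all

theorem cardMatrix_mul_eq_one {g h : ℕ → ℕ → R}
    (hgh : ∀ c n, Even n → ∑ k ∈ range (n + 1),
      (if Even k then n.choose k • (g (c + n) (c + k) * h (c + k) c) else 0)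
        = if n = 0 then 1 else 0) :
    cardMatrix α g * cardMatrix α h = 1 := by
  ext A C
  rw [cardMatrix_mul_apply, Matrix.one_apply]
  by_cases hCA : C.1 ⊆ A.1
  · have hcard : #A.1 = #C.1 + #(A.1 \ C.1) := by
      rw [card_sdiff_of_subset hCA, Nat.add_sub_cancel' (card_le_card hCA)]
    have hn : Even #(A.1 \ C.1) := by
      rw [card_sdiff_of_subset hCA, Nat.even_sub (card_le_card hCA)]
      simp only [A.2.2, C.2.2]
    have hAC : #(A.1 \ C.1) = 0 ↔ A = C := by
      rw [card_eq_zero, sdiff_eq_empty_iff_subset, Subtype.ext_iff]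
      exact ⟨fun h => h.antisymm hCA, fun h => h ▸ subset_rfl⟩
    simp only [← hAC]
    rw [sum_Icc_apply_card hCA (fun m => if Even m then g #A.1 m * h m #C.1 else 0),
      ← hgh #C.1 _ hn, ← hcard]
    refine sum_congr rfl fun k _ => ?_
    simp only [Nat.even_add, C.2.2, true_iff, smul_ite, smul_zero]
  · have hAC : A ≠ C := fun h => hCA (h ▸ subset_rfl)
    rw [Icc_eq_empty (by simpa using hCA), sum_empty, if_neg hAC]

end cardMatrix

theorem G_matrix_inverse_general
    {α : Type*} [Fintype α] [DecidableEq α]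
    (G H : Matrix {A : Finset α // A.Nonempty ∧ Even A.card}
                  {A : Finset α // A.Nonempty ∧ Even A.card} ℝ)
    (hG : ∀ A B, G A B = if B.1 ⊆ A.1 then (2 : ℝ) ^ (-(A.1.card : ℤ) + 1) else 0)
    (hH : ∀ A B, H A B =
      if B.1 ⊆ A.1 then (2 : ℝ) ^ ((B.1.card : ℤ) - 1) * (eulerNumber (A.1.card - B.1.card) : ℝ)
      else 0) :
    G * H = 1 ∧ H * G = 1 := by
  obtain rfl : G = cardMatrix α fun a _ => (2 : ℝ) ^ (-(a : ℤ) + 1) := Matrix.ext hG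
  obtain rfl : H = cardMatrix α fun b c => (2 : ℝ) ^ ((c : ℤ) - 1) * (eulerNumber (b - c) : ℝ) :=
    Matrix.ext hH
  constructor
  · refine cardMatrix_mul_eq_one fun c n hn => ?_
    have hterm : ∀ k, (if Even k then n.choose k • ((2 : ℝ) ^ (-((c + n : ℕ) : ℤ) + 1) *
        ((2 : ℝ) ^ ((c : ℤ) - 1) * (eulerNumber (c + k - c) : ℝ))) else 0)
        = (2 : ℝ) ^ (-(n : ℤ)) * (if Even k then (n.choose k : ℝ) * eulerNumber k else 0) := by
      have hpow : (2 : ℝ) ^ (-((c + n : ℕ) : ℤ) + 1) * 2 ^ ((c : ℤ) - 1) = 2 ^ (-(n : ℤ)) := by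
        rw [← zpow_add₀ two_ne_zero]
        push_cast
        ring_nf
      intro k
      rw [Nat.add_sub_cancel_left, nsmul_eq_mul, ← hpow]
      split_ifs <;> ring
    rw [sum_congr rfl fun k _ => hterm k, ← mul_sum, eulerNumber_sum_choose_of_even hn]
    split_ifs with h0 <;> simp [h0]
  · refine cardMatrix_mul_eq_one fun c n hn => ?_
    rw [← eulerNumber_sum_choose_rev_of_even hn]
    refine sum_congr rfl fun k _ => ?_
    have hpow : (2 : ℝ) ^ (((c + k : ℕ) : ℤ) - 1) * 2 ^ (-((c + k : ℕ) : ℤ) + 1) = 1 := by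
      rw [← zpow_add₀ two_ne_zero, sub_add_add_cancel, add_neg_cancel, zpow_zero]
    rw [Nat.add_sub_add_left, nsmul_eq_mul, mul_right_comm _ _ (2 ^ _), hpow, one_mul]

/-- Let `X` be a finite set with `|X| ≥ 2` (here the type `α`),
and index real matrices by the nonempty even-cardinality subsets of `X`.
With `G_{AB} = 2^{−|A|+1}` for `B ⊆ A` (else `0`) and
`H_{AB} = 2^{|B|−1} 𝔼_{|A|−|B|}` for `B ⊆ A` (else `0`),
`G` is invertible with inverse `H`: `G·H = H·G = I`. -/
theorem G_matrix_inverse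
    {α : Type*} [Fintype α] [DecidableEq α] (hX : 2 ≤ Fintype.card α)
    (G H : Matrix {A : Finset α // A.Nonempty ∧ Even A.card}
                  {A : Finset α // A.Nonempty ∧ Even A.card} ℝ)
    (hG : ∀ A B, G A B = if B.1 ⊆ A.1 then (2 : ℝ) ^ (-(A.1.card : ℤ) + 1) else 0)
    (hH : ∀ A B, H A B =
      if B.1 ⊆ A.1 then (2 : ℝ) ^ ((B.1.card : ℤ) - 1) * (eulerNumber (A.1.card - B.1.card) : ℝ)
      else 0) :
    G * H = 1 ∧ H * G = 1 :=
  G_matrix_inverse_general G H hG hH
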